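/- arXiv:2006.08266 — 8 statements merged into one kernel-verified Lean document; each statement's English description precedes it below -/
import Mathlib

section
/- For every i with 2 ≤ i ≤ n: x_{i,0}(t) = false for 0 ≤ t ≤ 2^{i-1} + 2i - 5; x_{i,0}(t) = true whenever l·2^{i-1} + 2i - 4 ≤ t ≤ (l+1)·2^{i-1} + 2i - 5 for some odd integer l ≥ 1; and x_{i,0}(t) = false whenever l·2^{i-1} + 2i - 4 ≤ t ≤ (l+1)·2^{i-1} + 2i - 5 for some even integer l ≥ 2. Moreover, for every i with 2 ≤ i ≤ n-1: y_i(t) = true if and only if there is an integer l ≥ 1 with l·2^{i} + 2i - 4 ≤ t ≤ l·2^{i} + 2i - 3. -/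
def Xc (i t : ℕ) : Bool := decide (((t - (2*i - 4)) / 2^(i-1)) % 2 = 1)
def Yc (i t : ℕ) : Bool := decide (2^i + 2*i - 4 ≤ t ∧ (t - (2*i - 4)) % 2^i ≤ 1)

lemma two_le_pow {i : ℕ} (h : 1 ≤ i) : 2 ≤ 2^i := by
  calc (2:ℕ) = 2^1 := by norm_num
  _ ≤ 2^i := Nat.pow_le_pow_right (by norm_num) h

lemma four_le_pow {i : ℕ} (h : 2 ≤ i) : 4 ≤ 2^i := by
  calc (4:ℕ) = 2^2 := by norm_num
  _ ≤ 2^i := Nat.pow_le_pow_right (by norm_num) h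

lemma hmod (p k r : ℕ) (hr : r < p) : (p*k + r) % p = r := by
  rw [Nat.mul_add_mod]; exact Nat.mod_eq_of_lt hr

lemma hdiv (p k r : ℕ) (hp : 0 < p) (hr : r < p) : (p*k + r) / p = k := by
  rw [Nat.mul_add_div hp, Nat.div_eq_of_lt hr]; omega

lemma hle (p k r c : ℕ) (hp : 0 < p) (hr : r < p) : c * p ≤ p * k + r ↔ c ≤ k := by
  constructor
  · intro h
    have h2 : c ≤ (p*k+r)/p := (Nat.le_div_iff_mul_le hp).mpr h
    rwa [hdiv p k r hp hr] at h2
  · intro h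
    have h2 : c ≤ (p*k+r)/p := by rw [hdiv p k r hp hr]; exact h
    exact (Nat.le_div_iff_mul_le hp).mp h2

lemma sub2_div (p r j : ℕ) (hp : 2 ≤ p) (hr : r < p) (hrr : r ≤ 1) (hj : 1 ≤ j) :
    (p * j + r - 2) / p = j - 1 := by
  obtain ⟨j', rfl⟩ := Nat.exists_eq_add_of_le hj
  have e : p * (1 + j') = p + p * j' := by ring
  rw [e]
  have e2 : p + p * j' + r - 2 = p * j' + (p + r - 2) := by
    generalize p * j' = A; omega
  rw [e2, Nat.mul_add_div (by omega : 0 < p), Nat.div_eq_of_lt (by omega : p + r - 2 < p)]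
  omega

lemma KEY1 (p u : ℕ) (hp : 4 ≤ p) :
    (((u - 2)/p) % 2 = 1 ∧ (p ≤ u ∧ u % p ≤ 1)) ↔ (2*p ≤ u ∧ u % (2*p) ≤ 1) := by
  obtain ⟨k, r, hr, rfl⟩ : ∃ k r, r < p ∧ u = p * k + r :=
    ⟨u/p, u%p, Nat.mod_lt _ (by omega), (Nat.div_add_mod u p).symm⟩
  obtain ⟨m, e, he, rfl⟩ : ∃ m e, e < 2 ∧ k = 2*m + e :=
    ⟨k/2, k%2, Nat.mod_lt _ (by omega), (Nat.div_add_mod k 2).symm⟩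
  have h1 := hmod p (2*m+e) r hr
  have hw : p*e + r < 2*p := by interval_cases e <;> omega
  have e2 : p*(2*m+e) + r = (2*p)*m + (p*e + r) := by ring
  have h2 : (p*(2*m+e) + r) % (2*p) = p*e + r := by
    rw [e2, hmod (2*p) m (p*e+r) hw]
  have h4 : 2*p ≤ p*(2*m+e) + r ↔ 1 ≤ m := by
    rw [e2]
    have := hle (2*p) m (p*e+r) 1 (by omega) hw
    rwa [one_mul] at this
  have h5 : p ≤ p*(2*m+e)+r ↔ 1 ≤ 2*m+e := by
    have := hle p (2*m+e) r 1 (by omega) hr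
    rwa [one_mul] at this
  rw [h1, h2, h4, h5]
  constructor
  · rintro ⟨hA, hB, hC⟩
    rw [sub2_div p r (2*m+e) (by omega) hr hC hB] at hA
    have he0 : e = 0 ∧ 1 ≤ m := by omega
    obtain ⟨rfl, hm⟩ := he0
    exact ⟨hm, by omega⟩
  · rintro ⟨hB, hC⟩
    have he0 : e = 0 := by interval_cases e <;> omega
    subst he0
    have hC' : r ≤ 1 := by omega
    have hB' : 1 ≤ 2*m+0 := by omega
    rw [sub2_div p r (2*m+0) (by omega) hr hC' hB']
    exact ⟨by omega, hB', hC'⟩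

lemma KEY2 (p u : ℕ) (hp : 4 ≤ p) :
    ((((p ≤ u ∧ u % p ≤ 1) ∧ ¬(((u-2)/p) % 2 = 1)) ∨ (¬(p ≤ u ∧ u % p ≤ 1) ∧ ((u-2)/p) % 2 = 1)) ↔ (u/p) % 2 = 1) := by
  obtain ⟨k, r, hr, rfl⟩ : ∃ k r, r < p ∧ u = p * k + r :=
    ⟨u/p, u%p, Nat.mod_lt _ (by omega), (Nat.div_add_mod u p).symm⟩
  have h1 := hmod p k r hr
  have h2 := hdiv p k r (by omega) hr
  have h5 : p ≤ p*k+r ↔ 1 ≤ k := by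
    have := hle p k r 1 (by omega) hr; rwa [one_mul] at this
  rw [h1, h2, h5]
  rcases Nat.lt_or_ge r 2 with hr2 | hr2
  · rcases Nat.eq_zero_or_pos k with rfl | hk
    · have e0 : p*0 + r - 2 = 0 := by omega
      rw [e0, Nat.zero_div]
      omega
    · rw [sub2_div p r k (by omega) hr (by omega) hk]
      omega
  · have e0 : p*k + r - 2 = p*k + (r - 2) := by generalize p*k = A; omega
    rw [e0, hdiv p k (r-2) (by omega) (by omega)]
    omega

lemma KEY4 (p u : ℕ) (hp : 4 ≤ p) :
    (p ≤ u ∧ u % p ≤ 1) ↔ ∃ l, 1 ≤ l ∧ l * p ≤ u ∧ u ≤ l * p + 1 := by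
  obtain ⟨k, r, hr, rfl⟩ : ∃ k r, r < p ∧ u = p * k + r :=
    ⟨u/p, u%p, Nat.mod_lt _ (by omega), (Nat.div_add_mod u p).symm⟩
  have h1 := hmod p k r hr
  have h5 : p ≤ p*k+r ↔ 1 ≤ k := by
    have := hle p k r 1 (by omega) hr; rwa [one_mul] at this
  rw [h1, h5]
  constructor
  · rintro ⟨hk, hr1⟩
    refine ⟨k, hk, ?_, ?_⟩
    · rw [mul_comm]; exact Nat.le_add_right _ _
    · rw [mul_comm]; exact Nat.add_le_add_left hr1 _
  · rintro ⟨l, hl, ha, hb⟩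
    have hlk : l ≤ k := (hle p k r l (by omega) hr).mp ha
    have hkl : k ≤ l := by
      by_contra hcon
      push_neg at hcon
      have h6 : (l+1) * p ≤ p * k + r := (hle p k r (l+1) (by omega) hr).mpr hcon
      have e : (l+1)*p = l*p + p := by ring
      have h7 : l*p + p ≤ l*p + 1 := by rw [← e]; exact le_trans h6 hb
      have h8 : p ≤ 1 := Nat.add_le_add_iff_left.mp h7
      omega
    obtain rfl : l = k := le_antisymm hlk hkl
    refine ⟨hl, ?_⟩
    rw [mul_comm] at hb
    have := Nat.add_le_add_iff_left.mp hb
    omega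

lemma Xc_zero (i : ℕ) : Xc i 0 = false := by
  simp [Xc]

lemma Xc_one (i : ℕ) (hi : 2 ≤ i) : Xc i 1 = false := by
  simp only [Xc, decide_eq_false_iff_not]
  have h2 : 2 ≤ 2^(i-1) := two_le_pow (by omega)
  rw [Nat.div_eq_of_lt (by generalize 2^(i-1) = p at h2 ⊢; omega : 1 - (2*i-4) < 2^(i-1))]
  norm_num

lemma Yc_small (i t : ℕ) (h2 : 2 ≤ i) (ht : t ≤ 1) : Yc i t = false := by
  simp only [Yc, decide_eq_false_iff_not]
  have h4 := four_le_pow h2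
  rintro ⟨ha, -⟩
  generalize 2^i = P at h4 ha
  omega

lemma LX2 (t : ℕ) : Xc 2 (t+2) = !Xc 2 t := by
  simp only [Xc, ← decide_not, decide_eq_decide]
  norm_num
  omega

lemma LY2 (t : ℕ) : Xc 2 t = Yc 2 (t+2) := by
  simp only [Xc, Yc, decide_eq_decide]
  norm_num
  omega

lemma LA (i t : ℕ) (hi : 3 ≤ i) : (Xc i t && Yc (i-1) t) = Yc i (t+2) := by
  simp only [Xc, Yc, ← Bool.decide_and, decide_eq_decide]
  have h4 : 4 ≤ 2^(i-1) := four_le_pow (by omega)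
  have h2p : 2^i = 2 * 2^(i-1) := by
    conv_lhs => rw [show i = (i-1)+1 by omega]
    rw [pow_succ']
  rw [h2p]
  generalize hP : 2^(i-1) = p at h4 ⊢
  have e1 : t - (2*i - 4) = (t - (2*(i-1) - 4)) - 2 := by omega
  have e2 : t + 2 - (2*i - 4) = t - (2*(i-1) - 4) := by omega
  have e3 : (p + 2*(i-1) - 4 ≤ t) ↔ (p ≤ t - (2*(i-1) - 4)) := by omega
  have e4 : (2*p + 2*i - 4 ≤ t + 2) ↔ (2*p ≤ t - (2*(i-1)-4)) := by omega
  rw [e1, e2, e3, e4]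
  exact KEY1 p (t - (2*(i-1) - 4)) (by omega)

lemma LB (i t : ℕ) (hi : 2 ≤ i) :
    ((Yc i t && !(Xc (i+1) t)) || (!(Yc i t) && Xc (i+1) t)) = Xc (i+1) (t+2) := by
  simp only [Xc, Yc, ← decide_not, ← Bool.decide_and, ← Bool.decide_or, decide_eq_decide]
  have h4 : 4 ≤ 2^i := four_le_pow hi
  simp only [Nat.add_sub_cancel]
  generalize hP : 2^i = P at h4 ⊢
  have e1 : t + 2 - (2*(i+1) - 4) = t - (2*i - 4) := by omega
  have e2 : t - (2*(i+1) - 4) = (t - (2*i-4)) - 2 := by omega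
  have e3 : (P + 2*i - 4 ≤ t) ↔ (P ≤ t - (2*i-4)) := by omega
  rw [e1, e2, e3]
  exact KEY2 P (t - (2*i-4)) (by omega)

/-- Behaviour of the neurons `x_{i,0}` and `y_i` of the counter circuit with parameter `n ≥ 2`. -/
theorem stmt_1
    (n : ℕ) (hn : 2 ≤ n)
    (I : ℕ → Bool) (x : ℕ → ℕ → Bool) (x1' x2' : ℕ → Bool)
    (y' y a b : ℕ → ℕ → Bool)
    (hI0 : I 0 = true) (hI : ∀ t, 1 ≤ t → I t = false)
    (hx0 : ∀ i, 1 ≤ i → i ≤ n → x i 0 = false)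
    (hx1'0 : x1' 0 = false) (hx2'0 : x2' 0 = false)
    (hy'0 : ∀ i, 2 ≤ i → i ≤ n - 1 → y' i 0 = false)
    (hy0 : ∀ i, 2 ≤ i → i ≤ n - 1 → y i 0 = false)
    (ha0 : ∀ i, 1 < i → i < n → a i 0 = false)
    (hb0 : ∀ i, 1 < i → i < n → b i 0 = false)
    (hx1 : ∀ t, x 1 (t + 1) = (I t || x1' t))
    (hx1' : ∀ t, x1' (t + 1) = x 1 t)
    (hx2' : ∀ t, x2' (t + 1) = (I t || !(x 2 t)))
    (hx2 : ∀ t, x 2 (t + 1) = x2' t)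
    (hy2' : ∀ t, y' 2 (t + 1) = x 2 t)
    (hyi' : ∀ i, 2 < i → i < n → ∀ t, y' i (t + 1) = (x i t && y (i - 1) t))
    (hyi : ∀ i, 1 < i → i < n → ∀ t, y i (t + 1) = y' i t)
    (hai : ∀ i, 1 < i → i < n → ∀ t, a i (t + 1) = (y i t && !(x (i + 1) t)))
    (hbi : ∀ i, 1 < i → i < n → ∀ t, b i (t + 1) = (!(y i t) && x (i + 1) t))
    (hxi : ∀ i, 2 < i → i ≤ n → ∀ t, x i (t + 1) = (a (i - 1) t || b (i - 1) t))
    :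
    (∀ i, 2 ≤ i → i ≤ n →
      (∀ t, t ≤ 2 ^ (i - 1) + 2 * i - 5 → x i t = false) ∧
      (∀ l, 1 ≤ l → l % 2 = 1 → ∀ t,
        l * 2 ^ (i - 1) + 2 * i - 4 ≤ t → t ≤ (l + 1) * 2 ^ (i - 1) + 2 * i - 5 →
        x i t = true) ∧
      (∀ l, 2 ≤ l → l % 2 = 0 → ∀ t,
        l * 2 ^ (i - 1) + 2 * i - 4 ≤ t → t ≤ (l + 1) * 2 ^ (i - 1) + 2 * i - 5 →
        x i t = false)) ∧
    (∀ i, 2 ≤ i → i ≤ n - 1 → ∀ t,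
      (y i t = true ↔ ∃ l, 1 ≤ l ∧ l * 2 ^ i + 2 * i - 4 ≤ t ∧ t ≤ l * 2 ^ i + 2 * i - 3)) := by
  have key : ∀ t,
      (∀ i, 2 ≤ i → i ≤ n → x i t = Xc i t) ∧
      (x2' t = Xc 2 (t+1)) ∧
      (∀ i, 2 ≤ i → i ≤ n-1 → y i t = Yc i t) ∧
      (∀ i, 2 ≤ i → i ≤ n-1 → y' i t = Yc i (t+1)) ∧
      (∀ i, 2 ≤ i → i ≤ n-1 → (a i t || b i t) = Xc (i+1) (t+1)) := by
    intro t
    induction t with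
    | zero =>
      refine ⟨?_, ?_, ?_, ?_, ?_⟩
      · intro i h2 hin; rw [hx0 i (by omega) hin, Xc_zero]
      · rw [hx2'0]; exact (Xc_one 2 le_rfl).symm
      · intro i h2 h1; rw [hy0 i h2 h1]; exact (Yc_small i 0 h2 (by omega)).symm
      · intro i h2 h1; rw [hy'0 i h2 h1]; exact (Yc_small i 1 h2 le_rfl).symm
      · intro i h2 h1
        rw [ha0 i (by omega) (by omega), hb0 i (by omega) (by omega)]
        simpa using (Xc_one (i+1) (by omega)).symm
    | succ t ih =>
      obtain ⟨ihx, ihx2', ihy, ihy', ihab⟩ := ih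
      refine ⟨?_, ?_, ?_, ?_, ?_⟩
      · intro i h2 hin
        rcases eq_or_lt_of_le h2 with rfl | hi
        · rw [hx2 t]; exact ihx2'
        · rw [hxi i hi hin t]
          have h := ihab (i-1) (by omega) (by omega)
          have e : i - 1 + 1 = i := by omega
          rw [e] at h
          exact h
      · show x2' (t+1) = Xc 2 (t+2)
        rcases Nat.eq_zero_or_pos t with rfl | ht
        · rw [hx2' 0, hI0]
          simp [Xc]
        · rw [hx2' t, hI t ht, ihx 2 le_rfl hn]
          simp only [Bool.false_or]
          exact (LX2 t).symm
      · intro i h2 h1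
        rw [hyi i (by omega) (by omega) t]
        exact ihy' i h2 h1
      · intro i h2 h1
        show y' i (t+1) = Yc i (t+2)
        rcases eq_or_lt_of_le h2 with rfl | hi
        · rw [hy2' t, ihx 2 le_rfl hn]
          exact LY2 t
        · rw [hyi' i hi (by omega) t, ihx i (by omega) (by omega),
            ihy (i-1) (by omega) (by omega)]
          exact LA i t (by omega)
      · intro i h2 h1
        show (a i (t+1) || b i (t+1)) = Xc (i+1) (t+2)
        rw [hai i (by omega) (by omega) t, hbi i (by omega) (by omega) t,
          ihy i h2 h1, ihx (i+1) (by omega) (by omega)]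
        exact LB i t h2
  constructor
  · intro i h2 hin
    have hp2 : 2 ≤ 2^(i-1) := two_le_pow (by omega)
    refine ⟨?_, ?_, ?_⟩
    · intro t ht
      rw [(key t).1 i h2 hin]
      simp only [Xc, decide_eq_false_iff_not]
      rw [Nat.div_eq_of_lt (by generalize 2^(i-1) = p at ht hp2 ⊢; omega :
        t - (2*i-4) < 2^(i-1))]
      norm_num
    · intro l hl hlodd t ht1 ht2
      rw [(key t).1 i h2 hin]
      simp only [Xc, decide_eq_true_eq]
      have hdd : (t - (2*i-4)) / 2^(i-1) = l := by
        apply Nat.div_eq_of_lt_le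
        · generalize l * 2^(i-1) = A at ht1 ⊢; omega
        · have hB : 2^(i-1) ≤ (l+1) * 2^(i-1) := Nat.le_mul_of_pos_left _ (by omega)
          generalize (l+1) * 2^(i-1) = B at hB ht2 ⊢
          generalize 2^(i-1) = p at hB hp2
          omega
      rw [hdd, hlodd]
    · intro l hl hleven t ht1 ht2
      rw [(key t).1 i h2 hin]
      simp only [Xc, decide_eq_false_iff_not]
      have hdd : (t - (2*i-4)) / 2^(i-1) = l := by
        apply Nat.div_eq_of_lt_le
        · generalize l * 2^(i-1) = A at ht1 ⊢; omega
        · have hB : 2^(i-1) ≤ (l+1) * 2^(i-1) := Nat.le_mul_of_pos_left _ (by omega)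
          generalize (l+1) * 2^(i-1) = B at hB ht2 ⊢
          generalize 2^(i-1) = p at hB hp2
          omega
      rw [hdd]
      omega
  · intro i h2 h1 t
    rw [(key t).2.2.1 i h2 h1]
    simp only [Yc, decide_eq_true_eq]
    have h4 : 4 ≤ 2^i := four_le_pow h2
    have e3 : (2^i + 2*i - 4 ≤ t) ↔ 2^i ≤ t - (2*i-4) := by
      generalize 2^i = P at h4 ⊢; omega
    rw [e3, KEY4 (2^i) (t - (2*i-4)) h4]
    constructor
    · rintro ⟨l, hl, ha', hb'⟩
      refine ⟨l, hl, ?_, ?_⟩ <;>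
      · have hP : 2^i ≤ l * 2^i := Nat.le_mul_of_pos_left _ (by omega)
        generalize l * 2^i = A at ha' hb' hP ⊢
        generalize 2^i = P at h4 hP
        omega
    · rintro ⟨l, hl, ha', hb'⟩
      refine ⟨l, hl, ?_, ?_⟩ <;>
      · have hP : 2^i ≤ l * 2^i := Nat.le_mul_of_pos_left _ (by omega)
        generalize l * 2^i = A at ha' hb' hP ⊢
        generalize 2^i = P at h4 hP
        omega
end

section
/- The sequence x_{1,2n} satisfies: x_{1,2n}(t) = false for 0 ≤ t ≤ 2n; x_{1,2n}(2n + k) = true for every odd integer k ≥ 1; and x_{1,2n}(2n + k) = false for every even integer k ≥ 2. That is, x_{1,2n} stimulates for the first time at time 2n+1 and thereafter changes its state at every time step. -/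
/-- The delayed neuron `x_{1,2n}` of the counter circuit stimulates for the first time at
time `2n+1` and thereafter changes its state at every time step. -/
theorem stmt_2
    (n : ℕ) (hn : 2 ≤ n)
    (I : ℕ → Bool) (x : ℕ → ℕ → Bool) (x1' x2' : ℕ → Bool)
    (y' y a b : ℕ → ℕ → Bool)
    (hI0 : I 0 = true) (hI : ∀ t, 1 ≤ t → I t = false)
    (hx0 : ∀ i, 1 ≤ i → i ≤ n → x i 0 = false)
    (hx1'0 : x1' 0 = false) (hx2'0 : x2' 0 = false)
    (hy'0 : ∀ i, 2 ≤ i → i ≤ n - 1 → y' i 0 = false)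
    (hy0 : ∀ i, 2 ≤ i → i ≤ n - 1 → y i 0 = false)
    (ha0 : ∀ i, 1 < i → i < n → a i 0 = false)
    (hb0 : ∀ i, 1 < i → i < n → b i 0 = false)
    (hx1 : ∀ t, x 1 (t + 1) = (I t || x1' t))
    (hx1' : ∀ t, x1' (t + 1) = x 1 t)
    (hx2' : ∀ t, x2' (t + 1) = (I t || !(x 2 t)))
    (hx2 : ∀ t, x 2 (t + 1) = x2' t)
    (hy2' : ∀ t, y' 2 (t + 1) = x 2 t)
    (hyi' : ∀ i, 2 < i → i < n → ∀ t, y' i (t + 1) = (x i t && y (i - 1) t))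
    (hyi : ∀ i, 1 < i → i < n → ∀ t, y i (t + 1) = y' i t)
    (hai : ∀ i, 1 < i → i < n → ∀ t, a i (t + 1) = (y i t && !(x (i + 1) t)))
    (hbi : ∀ i, 1 < i → i < n → ∀ t, b i (t + 1) = (!(y i t) && x (i + 1) t))
    (hxi : ∀ i, 2 < i → i ≤ n → ∀ t, x i (t + 1) = (a (i - 1) t || b (i - 1) t))
    (xd1 : ℕ → ℕ → Bool)
    (hxd10 : ∀ j, 1 ≤ j → j ≤ 2 * n → xd1 j 0 = false)
    (hxd11 : ∀ t, xd1 1 (t + 1) = x 1 t)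
    (hxd1j : ∀ j, 2 ≤ j → j ≤ 2 * n → ∀ t, xd1 j (t + 1) = xd1 (j - 1) t) :
    (∀ t, t ≤ 2 * n → xd1 (2 * n) t = false) ∧
    (∀ k, 1 ≤ k → k % 2 = 1 → xd1 (2 * n) (2 * n + k) = true) ∧
    (∀ k, 2 ≤ k → k % 2 = 0 → xd1 (2 * n) (2 * n + k) = false) := by
  have hx10 : x 1 0 = false := hx0 1 le_rfl (by omega)
  have hx11 : x 1 1 = true := by rw [hx1 0, hI0]; simp
  have hstep : ∀ t, x 1 (t + 2) = x 1 t := by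
    intro t
    rw [show t + 2 = (t + 1) + 1 from rfl, hx1, hI (t + 1) (by omega), hx1']
    simp
  have hpar : ∀ m, x 1 (2 * m) = false ∧ x 1 (2 * m + 1) = true := by
    intro m
    induction m with
    | zero => exact ⟨hx10, hx11⟩
    | succ m ih =>
      constructor
      · rw [show 2 * (m + 1) = 2 * m + 2 by ring, hstep]; exact ih.1
      · rw [show 2 * (m + 1) + 1 = (2 * m + 1) + 2 by ring, hstep]; exact ih.2
  have hshift : ∀ j, 1 ≤ j → j ≤ 2 * n → ∀ t, xd1 j (t + j) = x 1 t := by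
    intro j
    induction j with
    | zero => intro h; omega
    | succ j ih =>
      intro h1 h2 t
      rcases Nat.eq_zero_or_pos j with hj | hj
      · subst hj; exact hxd11 t
      · rw [show t + (j + 1) = (t + j) + 1 from rfl, hxd1j (j + 1) (by omega) h2,
          Nat.add_sub_cancel]
        exact ih (by omega) (by omega) t
  have hzero : ∀ j, 1 ≤ j → j ≤ 2 * n → ∀ t, t ≤ j → xd1 j t = false := by
    intro j
    induction j with
    | zero => intro h; omega
    | succ j ih =>
      intro h1 h2 t ht
      cases t with
      | zero => exact hxd10 _ h1 h2
      | succ s =>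
        rcases Nat.eq_zero_or_pos j with hj | hj
        · subst hj
          have hs : s = 0 := by omega
          subst hs
          rw [hxd11 0]; exact hx10
        · rw [hxd1j (j + 1) (by omega) h2 s, Nat.add_sub_cancel]
          exact ih hj (by omega) s (by omega)
  refine ⟨fun t ht => hzero (2 * n) (by omega) le_rfl t ht, ?_, ?_⟩
  · intro k hk hodd
    obtain ⟨m, hm⟩ : ∃ m, k = 2 * m + 1 := ⟨k / 2, by omega⟩
    rw [Nat.add_comm, hshift (2 * n) (by omega) le_rfl k, hm]
    exact (hpar m).2
  · intro k hk heven
    obtain ⟨m, hm⟩ : ∃ m, k = 2 * m := ⟨k / 2, by omega⟩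
    rw [Nat.add_comm, hshift (2 * n) (by omega) le_rfl k, hm]
    exact (hpar m).1
end

section
/- For every i with 2 ≤ i ≤ n, the sequence x_{i,2n+4-2i} satisfies: x_{i,2n+4-2i}(t) = false for 0 ≤ t ≤ 2^{i-1} + 2n - 1; x_{i,2n+4-2i}(t) = true whenever l·2^{i-1} + 2n ≤ t ≤ (l+1)·2^{i-1} + 2n - 1 for some odd integer l ≥ 1; and x_{i,2n+4-2i}(t) = false whenever l·2^{i-1} + 2n ≤ t ≤ (l+1)·2^{i-1} + 2n - 1 for some even integer l ≥ 2. -/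
/-!
Stage `i` of the circuit is a two-step pipelined binary counter: `x_{i,0}` is bit `i - 1` of
`t - (2i - 4)` (`counterBit`), and `y_i` fires exactly when adding `2` to `t - (2i - 2)` carries
into bit `i` (`counterCarry`); both are `false` before their starting time.
Indeed `x_{i+1}` toggles two steps after each carry `y_i`, since `x_{i+1}(t+2) = y_i(t) xor x_{i+1}(t)`,
and `y_{i+1}(t+2) = x_{i+1}(t) ∧ y_i(t)` is the carry of the next bit. The oscillator `x_{2,0}` is
the case of a carry at every step, and the delay line `x_{i,·}` shifts `x_{i,0}` by `2n + 4 - 2i`,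
so that every `x_{i,2n+4-2i}` is bit `i - 1` of the same count `t - 2n`.
-/

theorem add_two_div_of_two_le {P : ℕ} (hP : 2 ≤ P) (s : ℕ) :
    (s + 2) / P = s / P + if P - 2 ≤ s % P then 1 else 0 := by
  have hP0 : 0 < P := by omega
  have hlt := Nat.mod_lt s hP0
  have hs : s + 2 = (s % P + 2) + P * (s / P) := by have := Nat.mod_add_div s P; omega
  have hcarry : (s % P + 2) / P = if P - 2 ≤ s % P then 1 else 0 := by
    split_ifs
    · exact Nat.div_eq_of_lt_le (by omega) (by omega)
    · exact Nat.div_eq_of_lt (by omega)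
  rw [hs, Nat.add_mul_div_left _ _ hP0, hcarry, add_comm]

theorem sub_two_le_mod_two_mul_iff {P : ℕ} (hP : 2 ≤ P) (s : ℕ) :
    2 * P - 2 ≤ s % (2 * P) ↔ s / P % 2 = 1 ∧ P - 2 ≤ s % P := by
  have hmod : s % (P * 2) = s % P + P * (s / P % 2) := Nat.mod_mul
  have hlt := Nat.mod_lt s (by omega : 0 < P)
  rw [mul_comm, hmod]
  rcases Nat.mod_two_eq_zero_or_one (s / P) with h | h <;> rw [h] <;> omega

def counterBit (d k t : ℕ) : Bool := decide (d ≤ t ∧ (t - d) / 2 ^ k % 2 = 1)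

def counterCarry (d k t : ℕ) : Bool := decide (d ≤ t ∧ 2 ^ k - 2 ≤ (t - d) % 2 ^ k)

theorem counterBit_zero (d k : ℕ) : counterBit d k 0 = false := by
  simp [counterBit]

theorem counterBit_one {k : ℕ} (hk : 1 ≤ k) (d : ℕ) : counterBit d k 1 = false := by
  have := Nat.le_self_pow (by omega : k ≠ 0) 2
  simp only [counterBit, decide_eq_false_iff_not, not_and]
  intro _
  rw [Nat.div_eq_of_lt (by omega)]
  simp

theorem counterBit_add_two {k : ℕ} (hk : 1 ≤ k) (d t : ℕ) :
    counterBit d k (t + 2) = xor (counterCarry d k t) (counterBit d k t) := by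
  have hP : 2 ≤ 2 ^ k := Nat.le_self_pow (by omega) 2
  unfold counterBit counterCarry
  generalize 2 ^ k = P at hP ⊢
  by_cases hdt : d ≤ t
  · rw [show t + 2 - d = t - d + 2 by omega, add_two_div_of_two_le hP (t - d)]
    simp only [hdt, show d ≤ t + 2 by omega, true_and]
    by_cases hc : P - 2 ≤ (t - d) % P <;>
      simp only [hc, if_true, if_false, add_zero, decide_true, decide_false, Bool.true_xor,
        Bool.false_xor, ← decide_not, decide_eq_decide]
    omega
  · rw [Nat.div_eq_of_lt (by omega)]
    simp [hdt]

theorem counterBit_delay (d j k t : ℕ) :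
    (decide (j ≤ t) && counterBit d k (t - j)) = counterBit (d + j) k t := by
  simp only [counterBit, ← Bool.decide_and, decide_eq_decide, Nat.sub_sub, add_comm j d]
  omega

theorem counterBit_eq_of_mul_le {d k l t : ℕ} (h₁ : l * 2 ^ k + d ≤ t)
    (h₂ : t < (l + 1) * 2 ^ k + d) : counterBit d k t = decide (l % 2 = 1) := by
  have hdiv : (t - d) / 2 ^ k = l := Nat.div_eq_of_lt_le (by omega) (by omega)
  simp only [counterBit, hdiv, show d ≤ t by omega, true_and]

theorem counterBit_eq_false_of_lt {d k t : ℕ} (h : t < 2 ^ k + d) : counterBit d k t = false := by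
  by_cases hdt : d ≤ t
  · exact counterBit_eq_of_mul_le (l := 0) (by omega) (by omega)
  · simp [counterBit, hdt]

theorem counterCarry_zero_one (t : ℕ) : counterCarry 0 1 t = true := by
  simp [counterCarry]

theorem counterCarry_add_two_add_two {k : ℕ} (hk : 1 ≤ k) (d t : ℕ) :
    counterCarry (d + 2) (k + 1) (t + 2) = (counterBit d k t && counterCarry d k t) := by
  have hP : 2 ≤ 2 ^ k := Nat.le_self_pow (by omega) 2
  simp only [counterBit, counterCarry, pow_succ', Nat.add_sub_add_right, Nat.add_le_add_iff_right,
    sub_two_le_mod_two_mul_iff hP, ← Bool.decide_and, decide_eq_decide]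
  tauto

theorem eq_counterBit_of_add_two {X : ℕ → Bool} {d k : ℕ} (hk : 1 ≤ k) (h₀ : X 0 = false)
    (h₁ : X 1 = false) (hstep : ∀ t, X (t + 2) = xor (counterCarry d k t) (X t)) :
    X = counterBit d k := by
  funext t
  induction t using Nat.twoStepInduction with
  | zero => rw [h₀, counterBit_zero]
  | one => rw [h₁, counterBit_one hk]
  | more t ih _ => rw [hstep, ih, counterBit_add_two hk]

theorem eq_counterCarry_of_add_two {Y : ℕ → Bool} {d k : ℕ} (hk : 1 ≤ k) (h₀ : Y 0 = false)
    (h₁ : Y 1 = false) (hstep : ∀ t, Y (t + 2) = (counterBit d k t && counterCarry d k t)) :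
    Y = counterCarry (d + 2) (k + 1) := by
  funext t
  induction t using Nat.twoStepInduction with
  | zero => simp [h₀, counterCarry]
  | one => simp [h₁, counterCarry]
  | more t _ _ => rw [hstep, counterCarry_add_two_add_two hk]

theorem eq_counterBit_of_xor_gate {C X A B : ℕ → Bool} {d k : ℕ} (hk : 1 ≤ k)
    (hC : C = counterCarry d k) (hA : ∀ t, A (t + 1) = (C t && !X t))
    (hB : ∀ t, B (t + 1) = (!C t && X t)) (hX : ∀ t, X (t + 1) = (A t || B t))
    (hX₀ : X 0 = false) (hA₀ : A 0 = false) (hB₀ : B 0 = false) : X = counterBit d k := by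
  refine eq_counterBit_of_add_two hk hX₀ (by rw [hX, hA₀, hB₀]; rfl) fun t => ?_
  rw [← hC, hX, hA, hB]
  cases C t <;> cases X t <;> rfl

theorem eq_counterCarry_of_and_gate {C X Y' Y : ℕ → Bool} {d k : ℕ} (hk : 1 ≤ k)
    (hC : C = counterCarry d k) (hX : X = counterBit d k) (hY' : ∀ t, Y' (t + 1) = (X t && C t))
    (hY : ∀ t, Y (t + 1) = Y' t) (hY₀ : Y 0 = false) (hY'₀ : Y' 0 = false) :
    Y = counterCarry (d + 2) (k + 1) := by
  refine eq_counterCarry_of_add_two hk hY₀ (by rw [hY, hY'₀]) fun t => ?_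
  rw [hY, hY', hX, hC]

theorem oscillator_eq_counterBit {I X X' : ℕ → Bool} (hI : ∀ t, 1 ≤ t → I t = false)
    (hX₀ : X 0 = false) (hX'₀ : X' 0 = false) (hX' : ∀ t, X' (t + 1) = (I t || !X t))
    (hX : ∀ t, X (t + 1) = X' t) : X = counterBit 0 1 := by
  refine eq_counterBit_of_add_two le_rfl hX₀ (by rw [hX, hX'₀]) fun t => ?_
  rw [counterCarry_zero_one, hX, hX']
  rcases Nat.eq_zero_or_pos t with rfl | ht
  · simp [hX₀]
  · simp [hI t ht]

theorem delayLine_eq {src : ℕ → Bool} {D : ℕ → ℕ → Bool} {m : ℕ}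
    (h₀ : ∀ j, 1 ≤ j → j ≤ m → D j 0 = false) (h₁ : ∀ t, D 1 (t + 1) = src t)
    (hstep : ∀ j, 2 ≤ j → j ≤ m → ∀ t, D j (t + 1) = D (j - 1) t) :
    ∀ j, 1 ≤ j → j ≤ m → ∀ t, D j t = (decide (j ≤ t) && src (t - j)) := by
  intro j hj
  induction j, hj using Nat.le_induction with
  | base =>
    rintro hm (_ | t)
    · simp [h₀ 1 le_rfl hm]
    · simp [h₁]
  | succ j hj ih =>
    rintro hm (_ | t)
    · simp [h₀ (j + 1) (by omega) hm]
    · rw [hstep (j + 1) (by omega) hm, Nat.add_sub_cancel, ih (by omega)]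
      simp [Nat.add_sub_add_right]

theorem counter_x_eq {n : ℕ} {x y' y a b : ℕ → ℕ → Bool}
    (hx0 : ∀ i, 1 ≤ i → i ≤ n → x i 0 = false)
    (hy'0 : ∀ i, 2 ≤ i → i ≤ n - 1 → y' i 0 = false)
    (hy0 : ∀ i, 2 ≤ i → i ≤ n - 1 → y i 0 = false)
    (ha0 : ∀ i, 1 < i → i < n → a i 0 = false)
    (hb0 : ∀ i, 1 < i → i < n → b i 0 = false)
    (hx2 : x 2 = counterBit 0 1)
    (hy2' : ∀ t, y' 2 (t + 1) = x 2 t)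
    (hyi' : ∀ i, 2 < i → i < n → ∀ t, y' i (t + 1) = (x i t && y (i - 1) t))
    (hyi : ∀ i, 1 < i → i < n → ∀ t, y i (t + 1) = y' i t)
    (hai : ∀ i, 1 < i → i < n → ∀ t, a i (t + 1) = (y i t && !(x (i + 1) t)))
    (hbi : ∀ i, 1 < i → i < n → ∀ t, b i (t + 1) = (!(y i t) && x (i + 1) t))
    (hxi : ∀ i, 2 < i → i ≤ n → ∀ t, x i (t + 1) = (a (i - 1) t || b (i - 1) t)) :
    ∀ i, 2 ≤ i → i ≤ n → x i = counterBit (2 * i - 4) (i - 1) := by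
  have x_succ (i : ℕ) (hi : 2 ≤ i) (hin : i < n) (hy : y i = counterCarry (2 * i - 2) i) :
      x (i + 1) = counterBit (2 * i - 2) i :=
    eq_counterBit_of_xor_gate (by omega) hy (hai i hi hin) (hbi i hi hin)
      (by simpa using hxi (i + 1) (by omega) hin) (hx0 _ (by omega) hin) (ha0 i hi hin)
      (hb0 i hi hin)
  have y_eq (i : ℕ) (hi : 2 ≤ i) : i < n → y i = counterCarry (2 * i - 2) i := by
    induction i, hi using Nat.le_induction with
    | base =>
      intro h2n
      exact eq_counterCarry_of_and_gate le_rfl (funext counterCarry_zero_one).symm hx2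
        (by simp [hy2']) (hyi 2 one_lt_two h2n) (hy0 2 le_rfl (by omega))
        (hy'0 2 le_rfl (by omega))
    | succ i hi ih =>
      intro hin
      have hy := ih (by omega)
      rw [show 2 * (i + 1) - 2 = 2 * i - 2 + 2 by omega]
      exact eq_counterCarry_of_and_gate (by omega) hy (x_succ i hi (by omega) hy)
        (by simpa using hyi' (i + 1) (by omega) hin) (hyi _ (by omega) hin)
        (hy0 _ (by omega) (by omega)) (hy'0 _ (by omega) (by omega))
  intro i hi hin
  rcases hi.eq_or_lt with rfl | hi
  · exact hx2
  · obtain ⟨j, rfl⟩ : ∃ j, i = j + 1 := ⟨i - 1, by omega⟩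
    rw [show 2 * (j + 1) - 4 = 2 * j - 2 by omega, Nat.add_sub_cancel]
    exact x_succ j (by omega) (by omega) (y_eq j (by omega) (by omega))
theorem stmt_3_general
    (n : ℕ)
    (I : ℕ → Bool) (x : ℕ → ℕ → Bool) (x2' : ℕ → Bool)
    (y' y a b : ℕ → ℕ → Bool)
    (hI : ∀ t, 1 ≤ t → I t = false)
    (hx0 : ∀ i, 1 ≤ i → i ≤ n → x i 0 = false)
    (hx2'0 : x2' 0 = false)
    (hy'0 : ∀ i, 2 ≤ i → i ≤ n - 1 → y' i 0 = false)
    (hy0 : ∀ i, 2 ≤ i → i ≤ n - 1 → y i 0 = false)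
    (ha0 : ∀ i, 1 < i → i < n → a i 0 = false)
    (hb0 : ∀ i, 1 < i → i < n → b i 0 = false)
    (hx2' : ∀ t, x2' (t + 1) = (I t || !(x 2 t)))
    (hx2 : ∀ t, x 2 (t + 1) = x2' t)
    (hy2' : ∀ t, y' 2 (t + 1) = x 2 t)
    (hyi' : ∀ i, 2 < i → i < n → ∀ t, y' i (t + 1) = (x i t && y (i - 1) t))
    (hyi : ∀ i, 1 < i → i < n → ∀ t, y i (t + 1) = y' i t)
    (hai : ∀ i, 1 < i → i < n → ∀ t, a i (t + 1) = (y i t && !(x (i + 1) t)))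
    (hbi : ∀ i, 1 < i → i < n → ∀ t, b i (t + 1) = (!(y i t) && x (i + 1) t))
    (hxi : ∀ i, 2 < i → i ≤ n → ∀ t, x i (t + 1) = (a (i - 1) t || b (i - 1) t))
    (xd : ℕ → ℕ → ℕ → Bool)
    (hxd0 : ∀ i j, 2 ≤ i → i ≤ n → 1 ≤ j → j ≤ 2 * n + 4 - 2 * i → xd i j 0 = false)
    (hxd1 : ∀ i, 2 ≤ i → i ≤ n → ∀ t, xd i 1 (t + 1) = x i t)
    (hxdj : ∀ i j, 2 ≤ i → i ≤ n → 2 ≤ j → j ≤ 2 * n + 4 - 2 * i → ∀ t,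
      xd i j (t + 1) = xd i (j - 1) t) :
    ∀ i, 2 ≤ i → i ≤ n →
      (∀ t, t ≤ 2 ^ (i - 1) + 2 * n - 1 → xd i (2 * n + 4 - 2 * i) t = false) ∧
      (∀ l, 1 ≤ l → l % 2 = 1 → ∀ t,
        l * 2 ^ (i - 1) + 2 * n ≤ t → t ≤ (l + 1) * 2 ^ (i - 1) + 2 * n - 1 →
        xd i (2 * n + 4 - 2 * i) t = true) ∧
      (∀ l, 2 ≤ l → l % 2 = 0 → ∀ t,
        l * 2 ^ (i - 1) + 2 * n ≤ t → t ≤ (l + 1) * 2 ^ (i - 1) + 2 * n - 1 →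
        xd i (2 * n + 4 - 2 * i) t = false) := by
  intro i hi hin
  have hx2 := oscillator_eq_counterBit hI (hx0 2 one_le_two (hi.trans hin)) hx2'0 hx2' hx2
  have hx := counter_x_eq hx0 hy'0 hy0 ha0 hb0 hx2 hy2' hyi' hyi hai hbi hxi i hi hin
  have hxd : xd i (2 * n + 4 - 2 * i) = counterBit (2 * n) (i - 1) := by
    funext t
    rw [delayLine_eq (hxd0 i · hi hin) (hxd1 i hi hin) (hxdj i · hi hin) _ (by omega) le_rfl, hx,
      counterBit_delay, show 2 * i - 4 + (2 * n + 4 - 2 * i) = 2 * n by omega]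
  refine ⟨fun t ht => ?_, fun l _ hl t h₁ h₂ => ?_, fun l _ hl t h₁ h₂ => ?_⟩ <;> rw [hxd]
  · exact counterBit_eq_false_of_lt (Nat.lt_of_le_sub_one (by positivity) ht)
  · simpa [hl] using counterBit_eq_of_mul_le h₁ (Nat.lt_of_le_sub_one (by positivity) h₂)
  · simpa [hl] using counterBit_eq_of_mul_le h₁ (Nat.lt_of_le_sub_one (by positivity) h₂)

/-- Behaviour of the delayed neurons `x_{i,2n+4-2i}` (for `2 ≤ i ≤ n`) of the counter circuit. -/
theorem stmt_3
    (n : ℕ) (hn : 2 ≤ n)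
    (I : ℕ → Bool) (x : ℕ → ℕ → Bool) (x1' x2' : ℕ → Bool)
    (y' y a b : ℕ → ℕ → Bool)
    (hI0 : I 0 = true) (hI : ∀ t, 1 ≤ t → I t = false)
    (hx0 : ∀ i, 1 ≤ i → i ≤ n → x i 0 = false)
    (hx1'0 : x1' 0 = false) (hx2'0 : x2' 0 = false)
    (hy'0 : ∀ i, 2 ≤ i → i ≤ n - 1 → y' i 0 = false)
    (hy0 : ∀ i, 2 ≤ i → i ≤ n - 1 → y i 0 = false)
    (ha0 : ∀ i, 1 < i → i < n → a i 0 = false)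
    (hb0 : ∀ i, 1 < i → i < n → b i 0 = false)
    (hx1 : ∀ t, x 1 (t + 1) = (I t || x1' t))
    (hx1' : ∀ t, x1' (t + 1) = x 1 t)
    (hx2' : ∀ t, x2' (t + 1) = (I t || !(x 2 t)))
    (hx2 : ∀ t, x 2 (t + 1) = x2' t)
    (hy2' : ∀ t, y' 2 (t + 1) = x 2 t)
    (hyi' : ∀ i, 2 < i → i < n → ∀ t, y' i (t + 1) = (x i t && y (i - 1) t))
    (hyi : ∀ i, 1 < i → i < n → ∀ t, y i (t + 1) = y' i t)
    (hai : ∀ i, 1 < i → i < n → ∀ t, a i (t + 1) = (y i t && !(x (i + 1) t)))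
    (hbi : ∀ i, 1 < i → i < n → ∀ t, b i (t + 1) = (!(y i t) && x (i + 1) t))
    (hxi : ∀ i, 2 < i → i ≤ n → ∀ t, x i (t + 1) = (a (i - 1) t || b (i - 1) t))
    (xd : ℕ → ℕ → ℕ → Bool)
    (hxd0 : ∀ i j, 2 ≤ i → i ≤ n → 1 ≤ j → j ≤ 2 * n + 4 - 2 * i → xd i j 0 = false)
    (hxd1 : ∀ i, 2 ≤ i → i ≤ n → ∀ t, xd i 1 (t + 1) = x i t)
    (hxdj : ∀ i j, 2 ≤ i → i ≤ n → 2 ≤ j → j ≤ 2 * n + 4 - 2 * i → ∀ t,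
      xd i j (t + 1) = xd i (j - 1) t) :
    ∀ i, 2 ≤ i → i ≤ n →
      (∀ t, t ≤ 2 ^ (i - 1) + 2 * n - 1 → xd i (2 * n + 4 - 2 * i) t = false) ∧
      (∀ l, 1 ≤ l → l % 2 = 1 → ∀ t,
        l * 2 ^ (i - 1) + 2 * n ≤ t → t ≤ (l + 1) * 2 ^ (i - 1) + 2 * n - 1 →
        xd i (2 * n + 4 - 2 * i) t = true) ∧
      (∀ l, 2 ≤ l → l % 2 = 0 → ∀ t,
        l * 2 ^ (i - 1) + 2 * n ≤ t → t ≤ (l + 1) * 2 ^ (i - 1) + 2 * n - 1 →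
        xd i (2 * n + 4 - 2 * i) t = false) :=
  stmt_3_general n I x x2' y' y a b hI hx0 hx2'0 hy'0 hy0 ha0 hb0 hx2' hx2 hy2' hyi' hyi hai hbi hxi
    xd hxd0 hxd1 hxdj
end

section
/- Write b_1(t) := x_{1,2n}(t) and b_i(t) := x_{i,2n+4-2i}(t) for 2 ≤ i ≤ n. Then: (1) for every t ≥ 2n, the natural number Σ_{i=1}^{n} (if b_i(t) then 2^{i-1} else 0) equals (t - 2n) mod 2^n; (2) for every t < 2n, b_i(t) = false for all 1 ≤ i ≤ n; (3) for every string σ ∈ {false, true}^n there is a unique time t with 2n ≤ t ≤ 2n + 2^n - 1 such that b_i(t) = σ_i for all 1 ≤ i ≤ n. -/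
/-!
Every neuron reads off the binary expansion of a delayed clock. The loop `x_{1,0} ⇄ x_{1,0}'`
is started by the pulse `I` and alternates, so `x_{1,0}(t)` is bit 0 of `t`; the inverting loop
through `x_{2,0}'` has period 4 and yields bit 1. For `i ≥ 2`, `y_i` is the carry into bit `i`
when `2` is added to the clock (the AND of the bits `1, …, i - 1`, accumulated along the `y'`,
`y` chain), and `a_i, b_i, x_{i+1,0}` form a toggle that flips `x_{i+1,0}` exactly when this
carry is set. Hence `x_{i,0}(t)` is bit `i - 1` of `t - (2i - 4)`: each stage costs two time
steps, and the delay lines of length `2n + 4 - 2i` realign all bits to the common clock `t - 2n`.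
-/

namespace Nat

theorem testBit_add_of_le_two_pow {c i : ℕ} (s : ℕ) (hc : c ≤ 2 ^ i) :
    (s + c).testBit i = (s.testBit i ^^ decide (2 ^ i ≤ s % 2 ^ i + c)) := by
  have hpos : 0 < 2 ^ i := Nat.two_pow_pos i
  have hsplit : s + c = 2 ^ i * (s / 2 ^ i) + (s % 2 ^ i + c) := by
    have := div_add_mod s (2 ^ i)
    omega
  have hlow : (s % 2 ^ i + c).testBit i = decide (2 ^ i ≤ s % 2 ^ i + c) := by
    by_cases h : 2 ^ i ≤ s % 2 ^ i + c
    · have : s % 2 ^ i < 2 ^ i := mod_lt s hpos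
      rw [testBit_of_two_pow_le_and_two_pow_add_one_gt h (by rw [pow_succ]; omega)]
      simp [h]
    · simp [h, testBit_lt_two_pow (Nat.lt_of_not_le h)]
  rw [hsplit, testBit_mul_two_pow_add_eq, hlow, testBit_eq_decide_div_mod_eq]

/-- For `i ≥ 1`, this says that bits `1, …, i - 1` of `s` are all set. -/
def carryOfAddTwo (s i : ℕ) : Bool := decide (2 ^ i ≤ s % 2 ^ i + 2)

theorem testBit_add_two {i : ℕ} (s : ℕ) (hi : 1 ≤ i) :
    (s + 2).testBit i = (s.testBit i ^^ s.carryOfAddTwo i) :=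
  testBit_add_of_le_two_pow s (by simpa using Nat.pow_le_pow_right two_pos hi)

theorem testBit_add_two_sub {i : ℕ} (t k : ℕ) (hi : 2 ≤ i) :
    (t + 2 - k).testBit i = ((t - k).testBit i ^^ (t - k).carryOfAddTwo i) := by
  rcases le_or_gt k t with hkt | htk
  · rw [show t + 2 - k = t - k + 2 by omega, testBit_add_two _ (by omega)]
  · have : 4 ≤ 2 ^ i := by simpa using Nat.pow_le_pow_right two_pos hi
    rw [Nat.sub_eq_zero_of_le htk.le, testBit_lt_two_pow (by omega)]
    simp [carryOfAddTwo]
    omega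

theorem carryOfAddTwo_one (s : ℕ) : s.carryOfAddTwo 1 = true := by
  simp [carryOfAddTwo]

theorem carryOfAddTwo_succ {i : ℕ} (s : ℕ) (hi : 1 ≤ i) :
    s.carryOfAddTwo (i + 1) = (s.testBit i && s.carryOfAddTwo i) := by
  have h2 : 2 ≤ 2 ^ i := by simpa using Nat.pow_le_pow_right two_pos hi
  have hlow : s % 2 ^ i < 2 ^ i := mod_lt s (Nat.two_pow_pos i)
  rw [carryOfAddTwo, carryOfAddTwo, mod_pow_succ, pow_succ, ← toNat_testBit]
  cases s.testBit i <;> simp <;> omega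

theorem zero_carryOfAddTwo {i : ℕ} (hi : 2 ≤ i) : (0 : ℕ).carryOfAddTwo i = false := by
  have : 4 ≤ 2 ^ i := by simpa using Nat.pow_le_pow_right two_pos hi
  simp [carryOfAddTwo]
  omega

theorem sum_Icc_ite_testBit (m n : ℕ) :
    (∑ i ∈ Finset.Icc 1 n, if m.testBit (i - 1) then 2 ^ (i - 1) else 0) = m % 2 ^ n := by
  induction n with
  | zero => simp [mod_one]
  | succ k ih =>
    rw [Finset.sum_Icc_succ_top (by omega), ih, Nat.add_sub_cancel, mod_pow_succ,
      ← toNat_testBit]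
    cases m.testBit k <;> simp

theorem eq_of_testBit_eq_of_lt_two_pow {m m' n : ℕ} (hm : m < 2 ^ n) (hm' : m' < 2 ^ n)
    (h : ∀ j < n, m.testBit j = m'.testBit j) : m = m' :=
  eq_of_testBit_eq fun j => by
    by_cases hj : j < n
    · exact h j hj
    · have hn : 2 ^ n ≤ 2 ^ j := Nat.pow_le_pow_right two_pos (by omega)
      rw [testBit_lt_two_pow (by omega), testBit_lt_two_pow (by omega)]

theorem existsUnique_lt_two_pow_testBit_eq (n : ℕ) (σ : ℕ → Bool) :
    ∃! m, m < 2 ^ n ∧ ∀ j < n, m.testBit j = σ j := by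
  let bits : Fin (2 ^ n) → Fin n → Bool := fun m j => m.val.testBit j
  have hinj : Function.Injective bits := fun m m' h =>
    Fin.ext <| eq_of_testBit_eq_of_lt_two_pow m.2 m'.2 fun j hj => congrFun h ⟨j, hj⟩
  obtain ⟨m, hm⟩ :=
    ((Fintype.bijective_iff_injective_and_card bits).2 ⟨hinj, by simp⟩).2 fun j => σ j
  refine ⟨m, ⟨m.2, fun j hj => congrFun hm ⟨j, hj⟩⟩, fun m' ⟨hm', h'⟩ => ?_⟩
  exact eq_of_testBit_eq_of_lt_two_pow hm' m.2 fun j hj =>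
    (h' j hj).trans (congrFun hm ⟨j, hj⟩).symm

theorem existsUnique_testBit_sub_eq (N n : ℕ) (σ : ℕ → Bool) :
    ∃! t, N ≤ t ∧ t ≤ N + 2 ^ n - 1 ∧
      ∀ i, 1 ≤ i → i ≤ n → (t - N).testBit (i - 1) = σ i := by
  obtain ⟨m, ⟨hm, hbits⟩, huniq⟩ := existsUnique_lt_two_pow_testBit_eq n fun j => σ (j + 1)
  have hpos := Nat.one_le_two_pow (n := n)
  refine ⟨N + m, ⟨by omega, by omega, fun i hi hin => ?_⟩, fun t ⟨ht, ht', hσ⟩ => ?_⟩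
  · rw [Nat.add_sub_cancel_left, hbits (i - 1) (by omega), Nat.sub_add_cancel hi]
  · have := huniq (t - N) ⟨by omega, fun j hj => hσ (j + 1) (by omega) (by omega)⟩
    omega

end Nat

open Nat

section Motifs

variable {I p q c z w : ℕ → Bool}

theorem pulsedLoop_eq_testBit_zero (hI0 : I 0 = true) (hI : ∀ t, 1 ≤ t → I t = false)
    (hp0 : p 0 = false) (hp : ∀ t, p (t + 1) = (I t || q t))
    (hq : ∀ t, q (t + 1) = p t) (t : ℕ) : p t = t.testBit 0 := by
  induction t using Nat.twoStepInduction with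
  | zero => simp [hp0]
  | one => simp [hp, hI0]
  | more t ih _ =>
    rw [hp, hI (t + 1) (by omega), hq, Bool.false_or, ih]
    simp [Nat.testBit_zero]

theorem pulsedInverterLoop_eq_testBit_one (hI0 : I 0 = true) (hI : ∀ t, 1 ≤ t → I t = false)
    (hp0 : p 0 = false) (hq0 : q 0 = false) (hq : ∀ t, q (t + 1) = (I t || !p t))
    (hp : ∀ t, p (t + 1) = q t) (t : ℕ) : p t = t.testBit 1 := by
  induction t using Nat.twoStepInduction with
  | zero => simp [hp0]
  | one => rw [hp, hq0]; decide
  | more t ih _ =>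
    have hflip : p (t + 2) = !p t := by
      rcases Nat.eq_zero_or_pos t with rfl | ht
      · simp [hp, hq, hI0, hp0]
      · simp [hp, hq, hI t ht]
    rw [hflip, ih, testBit_add_two t le_rfl, carryOfAddTwo_one, Bool.xor_true]

theorem toggle_add_two {a b : ℕ → Bool} (hz : ∀ t, z (t + 1) = (a t || b t))
    (ha : ∀ t, a (t + 1) = (c t && !z t)) (hb : ∀ t, b (t + 1) = (!c t && z t)) (t : ℕ) :
    z (t + 2) = (c t ^^ z t) := by
  rw [hz, ha, hb]
  cases c t <;> cases z t <;> rfl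

theorem eq_testBit_of_add_two_eq_xor {i k : ℕ} (hi : 2 ≤ i) (h0 : z 0 = false)
    (h1 : z 1 = false) (hz : ∀ t, z (t + 2) = (c t ^^ z t))
    (hc : ∀ t, c t = (t - k).carryOfAddTwo i) (t : ℕ) : z t = (t - k).testBit i := by
  have h4 : 4 ≤ 2 ^ i := by simpa using Nat.pow_le_pow_right two_pos hi
  induction t using Nat.twoStepInduction with
  | zero => simp [h0]
  | one => rw [h1, Nat.testBit_lt_two_pow (by omega)]
  | more t ih _ => rw [hz, hc, ih, testBit_add_two_sub t k hi, Bool.xor_comm]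

theorem eq_carryOfAddTwo_of_add_two_eq_and {i k : ℕ} (hi : 1 ≤ i) (h0 : p 0 = false)
    (h1 : p 1 = false) (hp : ∀ t, p (t + 2) = (z t && w t))
    (hz : ∀ t, z t = (t - k).testBit i) (hw : ∀ t, w t = (t - k).carryOfAddTwo i) (t : ℕ) :
    p t = (t - (k + 2)).carryOfAddTwo (i + 1) := by
  match t with
  | 0 => rw [h0, Nat.zero_sub, zero_carryOfAddTwo (by omega)]
  | 1 => rw [h1, Nat.sub_eq_zero_of_le (by omega), zero_carryOfAddTwo (by omega)]
  | t + 2 => rw [hp, hz, hw, carryOfAddTwo_succ _ hi, Nat.add_sub_add_right]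

theorem delayLine_eq_s4 {d : ℕ → ℕ → Bool} {L : ℕ} (hp0 : p 0 = false)
    (hd0 : ∀ j, 1 ≤ j → j ≤ L → d j 0 = false) (hd1 : ∀ t, d 1 (t + 1) = p t)
    (hd : ∀ j, 2 ≤ j → j ≤ L → ∀ t, d j (t + 1) = d (j - 1) t) (t : ℕ) :
    ∀ j, 1 ≤ j → j ≤ L → d j t = p (t - j) := by
  induction t with
  | zero => intro j hj hjL; rw [hd0 j hj hjL, Nat.zero_sub, hp0]
  | succ t ih =>
    intro j hj hjL
    rcases hj.eq_or_lt with rfl | hj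
    · rw [hd1, Nat.add_sub_cancel]
    · rw [hd j hj hjL, ih (j - 1) (by omega) (by omega)]
      congr 1
      omega

end Motifs

/-- The counter circuit with parameter `n`; `x i` is `x_{i,0}`, and `x1'`, `x2'` are
`x_{1,0}'`, `x_{2,0}'`. -/
structure CounterCircuit (n : ℕ) where
  I : ℕ → Bool
  x : ℕ → ℕ → Bool
  x1' : ℕ → Bool
  x2' : ℕ → Bool
  y' : ℕ → ℕ → Bool
  y : ℕ → ℕ → Bool
  a : ℕ → ℕ → Bool
  b : ℕ → ℕ → Bool
  I_zero : I 0 = true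
  I_of_pos : ∀ t, 1 ≤ t → I t = false
  x_zero : ∀ i, 1 ≤ i → i ≤ n → x i 0 = false
  x2'_zero : x2' 0 = false
  y'_zero : ∀ i, 2 ≤ i → i ≤ n - 1 → y' i 0 = false
  y_zero : ∀ i, 2 ≤ i → i ≤ n - 1 → y i 0 = false
  a_zero : ∀ i, 1 < i → i < n → a i 0 = false
  b_zero : ∀ i, 1 < i → i < n → b i 0 = false
  x_one_succ : ∀ t, x 1 (t + 1) = (I t || x1' t)
  x1'_succ : ∀ t, x1' (t + 1) = x 1 t
  x2'_succ : ∀ t, x2' (t + 1) = (I t || !(x 2 t))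
  x_two_succ : ∀ t, x 2 (t + 1) = x2' t
  y'_two_succ : ∀ t, y' 2 (t + 1) = x 2 t
  y'_succ : ∀ i, 2 < i → i < n → ∀ t, y' i (t + 1) = (x i t && y (i - 1) t)
  y_succ : ∀ i, 1 < i → i < n → ∀ t, y i (t + 1) = y' i t
  a_succ : ∀ i, 1 < i → i < n → ∀ t, a i (t + 1) = (y i t && !(x (i + 1) t))
  b_succ : ∀ i, 1 < i → i < n → ∀ t, b i (t + 1) = (!(y i t) && x (i + 1) t)
  x_succ : ∀ i, 2 < i → i ≤ n → ∀ t, x i (t + 1) = (a (i - 1) t || b (i - 1) t)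

namespace CounterCircuit

variable {n : ℕ} (C : CounterCircuit n)

theorem x_one_eq_testBit (hn : 1 ≤ n) (t : ℕ) : C.x 1 t = t.testBit 0 :=
  pulsedLoop_eq_testBit_zero C.I_zero C.I_of_pos (C.x_zero 1 le_rfl hn) C.x_one_succ
    C.x1'_succ t

theorem x_two_eq_testBit (hn : 2 ≤ n) (t : ℕ) : C.x 2 t = t.testBit 1 :=
  pulsedInverterLoop_eq_testBit_one C.I_zero C.I_of_pos (C.x_zero 2 (by omega) hn)
    C.x2'_zero C.x2'_succ C.x_two_succ t

/-- The first AND stage, whose second input is the carry into bit 1, which is always set. -/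
theorem y_two_eq_carryOfAddTwo (hn : 3 ≤ n) (t : ℕ) : C.y 2 t = (t - 2).carryOfAddTwo 2 :=
  eq_carryOfAddTwo_of_add_two_eq_and (w := fun _ => true) (k := 0) le_rfl
    (C.y_zero 2 le_rfl (by omega))
    (by rw [C.y_succ 2 one_lt_two (by omega), C.y'_zero 2 le_rfl (by omega)])
    (fun t => by rw [C.y_succ 2 one_lt_two (by omega), C.y'_two_succ, Bool.and_true])
    (C.x_two_eq_testBit (by omega)) (fun t => (carryOfAddTwo_one _).symm) t

theorem x_succ_eq_testBit {i m : ℕ} (hi : 2 ≤ i) (hin : i < n)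
    (hy : ∀ t, C.y i t = (t - m).carryOfAddTwo i) (t : ℕ) :
    C.x (i + 1) t = (t - m).testBit i := by
  have hx : ∀ t, C.x (i + 1) (t + 1) = (C.a i t || C.b i t) := C.x_succ (i + 1) (by omega) hin
  refine eq_testBit_of_add_two_eq_xor hi (C.x_zero _ (by omega) hin) ?_
    (toggle_add_two hx (C.a_succ i (by omega) hin) (C.b_succ i (by omega) hin)) hy t
  rw [hx, C.a_zero i (by omega) hin, C.b_zero i (by omega) hin, Bool.or_false]

theorem y_succ_eq_carryOfAddTwo {i m : ℕ} (hi : 2 ≤ i) (hin : i + 1 < n)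
    (hx : ∀ t, C.x (i + 1) t = (t - m).testBit i)
    (hy : ∀ t, C.y i t = (t - m).carryOfAddTwo i) (t : ℕ) :
    C.y (i + 1) t = (t - (m + 2)).carryOfAddTwo (i + 1) := by
  have hy' := C.y_succ (i + 1) (by omega) hin
  refine eq_carryOfAddTwo_of_add_two_eq_and (by omega) (C.y_zero _ (by omega) (by omega))
    (by rw [hy', C.y'_zero _ (by omega) (by omega)]) (fun t => ?_) hx hy t
  rw [hy', C.y'_succ (i + 1) (by omega) hin, Nat.add_sub_cancel]

theorem x_eq_testBit_and_y_eq_carryOfAddTwo (k : ℕ) (hk : k + 2 ≤ n) :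
    (∀ t, C.x (k + 2) t = (t - 2 * k).testBit (k + 1)) ∧
      (k + 3 ≤ n → ∀ t, C.y (k + 2) t = (t - (2 * k + 2)).carryOfAddTwo (k + 2)) := by
  induction k with
  | zero => exact ⟨C.x_two_eq_testBit hk, C.y_two_eq_carryOfAddTwo⟩
  | succ k ih =>
    have hy := (ih (by omega)).2 hk
    have hx := C.x_succ_eq_testBit (by omega) (by omega) hy
    exact ⟨hx, fun hk => C.y_succ_eq_carryOfAddTwo (by omega) (by omega) hx hy⟩

theorem x_eq_testBit {i : ℕ} (hi : 1 ≤ i) (hin : i ≤ n) (t : ℕ) :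
    C.x i t = (t - (2 * i - 4)).testBit (i - 1) := by
  rcases hi.eq_or_lt with rfl | hi
  · exact C.x_one_eq_testBit hin t
  obtain ⟨k, rfl⟩ : ∃ k, i = k + 2 := ⟨i - 2, by omega⟩
  simpa [show 2 * (k + 2) - 4 = 2 * k by omega] using
    (C.x_eq_testBit_and_y_eq_carryOfAddTwo k hin).1 t

end CounterCircuit

theorem stmt_4_general
    (n : ℕ)
    (I : ℕ → Bool) (x : ℕ → ℕ → Bool) (x1' x2' : ℕ → Bool)
    (y' y a b : ℕ → ℕ → Bool)
    (hI0 : I 0 = true) (hI : ∀ t, 1 ≤ t → I t = false)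
    (hx0 : ∀ i, 1 ≤ i → i ≤ n → x i 0 = false)
    (hx2'0 : x2' 0 = false)
    (hy'0 : ∀ i, 2 ≤ i → i ≤ n - 1 → y' i 0 = false)
    (hy0 : ∀ i, 2 ≤ i → i ≤ n - 1 → y i 0 = false)
    (ha0 : ∀ i, 1 < i → i < n → a i 0 = false)
    (hb0 : ∀ i, 1 < i → i < n → b i 0 = false)
    (hx1 : ∀ t, x 1 (t + 1) = (I t || x1' t))
    (hx1' : ∀ t, x1' (t + 1) = x 1 t)
    (hx2' : ∀ t, x2' (t + 1) = (I t || !(x 2 t)))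
    (hx2 : ∀ t, x 2 (t + 1) = x2' t)
    (hy2' : ∀ t, y' 2 (t + 1) = x 2 t)
    (hyi' : ∀ i, 2 < i → i < n → ∀ t, y' i (t + 1) = (x i t && y (i - 1) t))
    (hyi : ∀ i, 1 < i → i < n → ∀ t, y i (t + 1) = y' i t)
    (hai : ∀ i, 1 < i → i < n → ∀ t, a i (t + 1) = (y i t && !(x (i + 1) t)))
    (hbi : ∀ i, 1 < i → i < n → ∀ t, b i (t + 1) = (!(y i t) && x (i + 1) t))
    (hxi : ∀ i, 2 < i → i ≤ n → ∀ t, x i (t + 1) = (a (i - 1) t || b (i - 1) t))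
    (xd1 : ℕ → ℕ → Bool)
    (hxd10 : ∀ j, 1 ≤ j → j ≤ 2 * n → xd1 j 0 = false)
    (hxd11 : ∀ t, xd1 1 (t + 1) = x 1 t)
    (hxd1j : ∀ j, 2 ≤ j → j ≤ 2 * n → ∀ t, xd1 j (t + 1) = xd1 (j - 1) t)
    (xd : ℕ → ℕ → ℕ → Bool)
    (hxd0 : ∀ i j, 2 ≤ i → i ≤ n → 1 ≤ j → j ≤ 2 * n + 4 - 2 * i → xd i j 0 = false)
    (hxd1' : ∀ i, 2 ≤ i → i ≤ n → ∀ t, xd i 1 (t + 1) = x i t)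
    (hxdj : ∀ i j, 2 ≤ i → i ≤ n → 2 ≤ j → j ≤ 2 * n + 4 - 2 * i → ∀ t,
      xd i j (t + 1) = xd i (j - 1) t)
    (B : ℕ → ℕ → Bool)
    (hB1 : ∀ t, B 1 t = xd1 (2 * n) t)
    (hBi : ∀ i, 2 ≤ i → i ≤ n → ∀ t, B i t = xd i (2 * n + 4 - 2 * i) t) :
    (∀ t, 2 * n ≤ t →
      (∑ i ∈ Finset.Icc 1 n, if B i t then 2 ^ (i - 1) else 0) = (t - 2 * n) % 2 ^ n) ∧
    (∀ t, t < 2 * n → ∀ i, 1 ≤ i → i ≤ n → B i t = false) ∧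
    (∀ σ : ℕ → Bool, ∃! t,
      2 * n ≤ t ∧ t ≤ 2 * n + 2 ^ n - 1 ∧ ∀ i, 1 ≤ i → i ≤ n → B i t = σ i) := by

  let C : CounterCircuit n := ⟨I, x, x1', x2', y', y, a, b, hI0, hI, hx0, hx2'0, hy'0, hy0, ha0,
    hb0, hx1, hx1', hx2', hx2, hy2', hyi', hyi, hai, hbi, hxi⟩
  have hx : ∀ i, 1 ≤ i → i ≤ n → ∀ t, x i t = (t - (2 * i - 4)).testBit (i - 1) :=
    fun _ => C.x_eq_testBit
  have hB : ∀ i t, 1 ≤ i → i ≤ n → B i t = (t - 2 * n).testBit (i - 1) := by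
    intro i t hi hin
    rcases hi.eq_or_lt with rfl | hi'
    · rw [hB1, delayLine_eq_s4 (hx0 1 hi hin) hxd10 hxd11 hxd1j t _ (by omega) le_rfl,
        hx 1 hi hin]
      rfl
    · rw [hBi i hi' hin, delayLine_eq_s4 (hx0 i hi hin) (hxd0 i · hi' hin) (hxd1' i hi' hin)
        (hxdj i · hi' hin) t _ (by omega) le_rfl, hx i hi hin]
      congr 1
      omega
  refine ⟨fun t _ => ?_, fun t ht i hi hin => ?_, fun σ => ?_⟩
  · rw [← Nat.sum_Icc_ite_testBit]
    refine Finset.sum_congr rfl fun i hi => ?_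
    rw [hB i t (Finset.mem_Icc.1 hi).1 (Finset.mem_Icc.1 hi).2]
  · rw [hB i t hi hin, Nat.sub_eq_zero_of_le ht.le, Nat.zero_testBit]
  · refine (existsUnique_congr fun t => ?_).2 (Nat.existsUnique_testBit_sub_eq (2 * n) n σ)
    refine and_congr_right' (and_congr_right' (forall₂_congr fun i hi => ?_))
    exact forall_congr' fun hin => by rw [hB i t hi hin]

/-- The delayed neurons of the counter circuit, read as the bits `b_1 = x_{1,2n}` and
`b_i = x_{i,2n+4-2i}` (for `2 ≤ i ≤ n`), count through the binary representations of
`(t - 2n) mod 2^n` for `t ≥ 2n`, are all `false` before time `2n`, and every `n`-bit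
string appears at a unique time in `[2n, 2n + 2^n - 1]`. -/
theorem stmt_4
    (n : ℕ) (hn : 2 ≤ n)
    (I : ℕ → Bool) (x : ℕ → ℕ → Bool) (x1' x2' : ℕ → Bool)
    (y' y a b : ℕ → ℕ → Bool)
    (hI0 : I 0 = true) (hI : ∀ t, 1 ≤ t → I t = false)
    (hx0 : ∀ i, 1 ≤ i → i ≤ n → x i 0 = false)
    (hx1'0 : x1' 0 = false) (hx2'0 : x2' 0 = false)
    (hy'0 : ∀ i, 2 ≤ i → i ≤ n - 1 → y' i 0 = false)
    (hy0 : ∀ i, 2 ≤ i → i ≤ n - 1 → y i 0 = false)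
    (ha0 : ∀ i, 1 < i → i < n → a i 0 = false)
    (hb0 : ∀ i, 1 < i → i < n → b i 0 = false)
    (hx1 : ∀ t, x 1 (t + 1) = (I t || x1' t))
    (hx1' : ∀ t, x1' (t + 1) = x 1 t)
    (hx2' : ∀ t, x2' (t + 1) = (I t || !(x 2 t)))
    (hx2 : ∀ t, x 2 (t + 1) = x2' t)
    (hy2' : ∀ t, y' 2 (t + 1) = x 2 t)
    (hyi' : ∀ i, 2 < i → i < n → ∀ t, y' i (t + 1) = (x i t && y (i - 1) t))
    (hyi : ∀ i, 1 < i → i < n → ∀ t, y i (t + 1) = y' i t)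
    (hai : ∀ i, 1 < i → i < n → ∀ t, a i (t + 1) = (y i t && !(x (i + 1) t)))
    (hbi : ∀ i, 1 < i → i < n → ∀ t, b i (t + 1) = (!(y i t) && x (i + 1) t))
    (hxi : ∀ i, 2 < i → i ≤ n → ∀ t, x i (t + 1) = (a (i - 1) t || b (i - 1) t))
    (xd1 : ℕ → ℕ → Bool)
    (hxd10 : ∀ j, 1 ≤ j → j ≤ 2 * n → xd1 j 0 = false)
    (hxd11 : ∀ t, xd1 1 (t + 1) = x 1 t)
    (hxd1j : ∀ j, 2 ≤ j → j ≤ 2 * n → ∀ t, xd1 j (t + 1) = xd1 (j - 1) t)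
    (xd : ℕ → ℕ → ℕ → Bool)
    (hxd0 : ∀ i j, 2 ≤ i → i ≤ n → 1 ≤ j → j ≤ 2 * n + 4 - 2 * i → xd i j 0 = false)
    (hxd1' : ∀ i, 2 ≤ i → i ≤ n → ∀ t, xd i 1 (t + 1) = x i t)
    (hxdj : ∀ i j, 2 ≤ i → i ≤ n → 2 ≤ j → j ≤ 2 * n + 4 - 2 * i → ∀ t,
      xd i j (t + 1) = xd i (j - 1) t)
    (B : ℕ → ℕ → Bool)
    (hB1 : ∀ t, B 1 t = xd1 (2 * n) t)
    (hBi : ∀ i, 2 ≤ i → i ≤ n → ∀ t, B i t = xd i (2 * n + 4 - 2 * i) t) :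
    (∀ t, 2 * n ≤ t →
      (∑ i ∈ Finset.Icc 1 n, if B i t then 2 ^ (i - 1) else 0) = (t - 2 * n) % 2 ^ n) ∧
    (∀ t, t < 2 * n → ∀ i, 1 ≤ i → i ≤ n → B i t = false) ∧
    (∀ σ : ℕ → Bool, ∃! t,
      2 * n ≤ t ∧ t ≤ 2 * n + 2 ^ n - 1 ∧ ∀ i, 1 ≤ i → i ≤ n → B i t = σ i) :=
  stmt_4_general n I x x1' x2' y' y a b hI0 hI hx0 hx2'0 hy'0 hy0 ha0 hb0 hx1 hx1' hx2' hx2 hy2'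
    hyi' hyi hai hbi hxi xd1 hxd10 hxd11 hxd1j xd hxd0 hxd1' hxdj B hB1 hBi
end

section
/- If for some integer l ≥ 1 and some a ∈ {false, true} one has x(l·2^{k-1} + 2k - 6) = x(l·2^{k-1} + 2k - 5) = a, then x(t) = ¬a for every t with l·2^{k-1} + 2k - 4 ≤ t ≤ (l+1)·2^{k-1} + 2k - 5. -/
/-- Consequence of the inductive hypothesis in the counter analysis: if `x` takes the
value `a` at the two consecutive times `l·2^{k-1} + 2k - 6` and `l·2^{k-1} + 2k - 5`
(for some `l ≥ 1`), then `x` takes the value `¬a` throughout the interval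
`[l·2^{k-1} + 2k - 4, (l+1)·2^{k-1} + 2k - 5]`. -/
theorem stmt_5 (k : ℕ) (hk : 3 ≤ k) (y x : ℕ → Bool)
    (hy : ∀ t, y t = true ↔
      ∃ s, 1 ≤ s ∧ s * 2 ^ (k - 1) + 2 * k - 6 ≤ t ∧ t ≤ s * 2 ^ (k - 1) + 2 * k - 5)
    (hx : ∀ t, 2 ≤ t → x t = Bool.xor (y (t - 2)) (x (t - 2)))
    (l : ℕ) (hl : 1 ≤ l) (a : Bool)
    (ha1 : x (l * 2 ^ (k - 1) + 2 * k - 6) = a)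
    (ha2 : x (l * 2 ^ (k - 1) + 2 * k - 5) = a) :
    ∀ t, l * 2 ^ (k - 1) + 2 * k - 4 ≤ t → t ≤ (l + 1) * 2 ^ (k - 1) + 2 * k - 5 →
      x t = !a := by
  have hP : 4 ≤ 2 ^ (k - 1) := by
    calc (4:ℕ) = 2 ^ 2 := rfl
    _ ≤ 2 ^ (k - 1) := Nat.pow_le_pow_right (by norm_num) (by omega)
  set P := 2 ^ (k - 1) with hPdef
  have hlP : P ≤ l * P := Nat.le_mul_of_pos_left _ hl
  have hsplit : (l + 1) * P = l * P + P := by ring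
  intro t
  induction t using Nat.strong_induction_on with
  | _ t ih =>
    intro ht1 ht2
    by_cases hbase : t ≤ l * P + 2 * k - 3
    · have h2 : 2 ≤ t := by omega
      rw [hx t h2]
      have hy2 : y (t - 2) = true := by
        rw [hy]; exact ⟨l, hl, by omega, by omega⟩
      have hxa : x (t - 2) = a := by
        rcases (by omega : t - 2 = l * P + 2 * k - 6 ∨ t - 2 = l * P + 2 * k - 5) with h | h
        · rw [h]; exact ha1
        · rw [h]; exact ha2
      rw [hy2, hxa]; cases a <;> rfl
    · have h2 : 2 ≤ t := by omega
      rw [hx t h2]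
      have hy2 : y (t - 2) = false := by
        rw [← Bool.not_eq_true, hy]
        rintro ⟨s, hs, hs1, hs2⟩
        rcases le_or_gt s l with h | h
        · have : s * P ≤ l * P := Nat.mul_le_mul_right _ h
          omega
        · have : (l + 1) * P ≤ s * P := Nat.mul_le_mul_right _ h
          omega
      have hih := ih (t - 2) (by omega) (by omega) (by omega)
      rw [hy2, hih]; cases a <;> rfl
end

section
/- For all t ≥ 0: p(t) ∨ q(t) = true if and only if t = l·2^{i-1} + 2n + m + i - 2 for some integer l ≥ 1. Equivalently, ¬p(t) ∧ ¬q(t) = false exactly at the times t = l·2^{i-1} + 2n + m + i - 2 with l ≥ 1. -/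
/-!
The input `x` is a square wave of half-period `P = 2^(i-1)`, switched on at the odd blocks after
the offset `2n`, i.e. `x t` holds iff `2n ≤ t` and `⌊(t - 2n) / P⌋` is odd; so `x` changes value
between `u` and `u + 1` exactly when `u + 1 = kP + 2n` with `k ≥ 1`. The neurons `z₁`, `z₂` are copies
of `x` delayed by consecutive amounts, and `p ∨ q` one step later is `z₁ xor z₂`, which detects
precisely these changes of `x`, shifted by the total delay `m + i - 2`.
-/

theorem exists_odd_block_iff_odd_div {P c t : ℕ} (hP : 0 < P) :
    (∃ l, 1 ≤ l ∧ l % 2 = 1 ∧ l * P + c ≤ t ∧ t ≤ (l + 1) * P + c - 1) ↔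
      c ≤ t ∧ Odd ((t - c) / P) := by
  constructor
  · rintro ⟨l, -, hl, hlo, hhi⟩
    rw [add_one_mul] at hhi
    have hdiv : (t - c) / P = l := Nat.div_eq_of_lt_le (by omega) (by rw [add_one_mul]; omega)
    exact ⟨by omega, hdiv ▸ Nat.odd_iff.mpr hl⟩
  · rintro ⟨hc, hodd⟩
    have hdecomp := Nat.div_add_mod' (t - c) P
    have hmod := Nat.mod_lt (t - c) hP
    refine ⟨(t - c) / P, hodd.pos, Nat.odd_iff.mp hodd, by omega, ?_⟩
    rw [add_one_mul]
    omega

theorem succ_ne_iff_of_odd_div {x : ℕ → Bool} {P c : ℕ} (hP : 0 < P)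
    (hx : ∀ t, x t = true ↔ c ≤ t ∧ Odd ((t - c) / P)) (u : ℕ) :
    x (u + 1) ≠ x u ↔ ∃ k, 1 ≤ k ∧ u + 1 = k * P + c := by
  rw [Ne, Bool.eq_iff_iff, hx, hx]
  rcases lt_or_ge u c with hu | hu
  · have hlt : u + 1 - c = 0 := by omega
    simp only [hlt, Nat.zero_div, Nat.not_odd_zero, and_false, show ¬c ≤ u by omega]
    refine iff_of_false (by simp) ?_
    rintro ⟨k, hk, hkP⟩
    have := Nat.mul_pos hk hP
    omega
  · obtain ⟨s, rfl⟩ := Nat.exists_eq_add_of_le hu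
    simp only [show c + s + 1 - c = s + 1 by omega, Nat.add_sub_cancel_left, Nat.succ_div,
      show c ≤ c + s + 1 by omega, hu, true_and]
    constructor
    · intro hne
      obtain ⟨k, hk⟩ : P ∣ s + 1 := by
        by_contra hndvd
        simp [hndvd] at hne
      exact ⟨k, Nat.pos_of_ne_zero (by rintro rfl; simp at hk), by rw [mul_comm]; omega⟩
    · rintro ⟨k, -, hk⟩
      have hdvd : P ∣ s + 1 := ⟨k, by linarith⟩
      simp only [hdvd, if_true, Nat.odd_add_one, ← Nat.not_even_iff_odd]
      tauto

theorem delayed_ne_iff {x z₁ z₂ : ℕ → Bool} {e : ℕ}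
    (h₁ : ∀ t, z₁ (t + e) = x t) (h₂ : ∀ t, z₂ (t + (e + 1)) = x t)
    (h₁0 : ∀ t ≤ e, z₁ t = false) (h₂0 : ∀ t ≤ e, z₂ t = false) (t : ℕ) :
    z₁ t ≠ z₂ t ↔ ∃ u, t = u + 1 + e ∧ x (u + 1) ≠ x u := by
  rcases le_or_gt t e with ht | ht
  · rw [h₁0 t ht, h₂0 t ht]
    exact iff_of_false (by simp) (by omega)
  · obtain ⟨u, rfl⟩ : ∃ u, t = u + 1 + e := ⟨t - e - 1, by omega⟩
    have hz₂ : z₂ (u + 1 + e) = x u := by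
      rw [show u + 1 + e = u + (e + 1) by omega, h₂]
    rw [h₁, hz₂]
    exact ⟨fun h => ⟨u, rfl, h⟩, fun ⟨v, hv, h⟩ => by
      obtain rfl : v = u := by omega
      exact h⟩

theorem stmt_7_general (i n m : ℕ) (hi : 3 ≤ i)
    (x : ℕ → Bool)
    (hx : ∀ t, x t = true ↔
      ∃ l, 1 ≤ l ∧ l % 2 = 1 ∧ l * 2 ^ (i - 1) + 2 * n ≤ t ∧
        t ≤ (l + 1) * 2 ^ (i - 1) + 2 * n - 1)
    (z1 z2 : ℕ → Bool)
    (hz1 : ∀ t, z1 (t + (m + i - 3)) = x t)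
    (hz2 : ∀ t, z2 (t + (m + i - 2)) = x t)
    (hz10 : ∀ t, t ≤ m + i - 3 → z1 t = false)
    (hz20 : ∀ t, t ≤ m + i - 2 → z2 t = false)
    (p q : ℕ → Bool) (hp0 : p 0 = false) (hq0 : q 0 = false)
    (hp : ∀ t, p (t + 1) = (z1 t && !(z2 t)))
    (hq : ∀ t, q (t + 1) = (!(z1 t) && z2 t)) :
    ∀ t, ((p t || q t) = true ↔ ∃ l, 1 ≤ l ∧ t = l * 2 ^ (i - 1) + 2 * n + m + i - 2) ∧
      ((!(p t) && !(q t)) = false ↔ ∃ l, 1 ≤ l ∧ t = l * 2 ^ (i - 1) + 2 * n + m + i - 2) := by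
  have hP : 0 < 2 ^ (i - 1) := by positivity
  have hdelay : m + i - 2 = m + i - 3 + 1 := by omega
  have hflip := succ_ne_iff_of_odd_div hP fun t => (hx t).trans (exists_odd_block_iff_odd_div hP)
  have hfire : ∀ t, (p t || q t) = true ↔ ∃ l, 1 ≤ l ∧ t = l * 2 ^ (i - 1) + 2 * n + m + i - 2 := by
    rintro (_ | t)
    · refine iff_of_false (by simp [hp0, hq0]) ?_
      rintro ⟨l, hl, h⟩
      have := Nat.mul_pos hl hP
      omega
    · have hxor : (p (t + 1) || q (t + 1)) = true ↔ z1 t ≠ z2 t := by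
        rw [hp, hq]
        cases z1 t <;> cases z2 t <;> decide
      rw [hxor, delayed_ne_iff hz1 (hdelay ▸ hz2) hz10 fun s hs => hz20 s (by omega)]
      simp only [hflip]
      constructor
      · rintro ⟨u, rfl, k, hk, hu⟩
        exact ⟨k, hk, by omega⟩
      · rintro ⟨l, hl, ht⟩
        have := Nat.mul_pos hl hP
        exact ⟨l * 2 ^ (i - 1) + 2 * n - 1, by omega, l, hl, by omega⟩
  intro t
  refine ⟨hfire t, ?_⟩
  rw [← Bool.not_or, Bool.not_eq_false', hfire]

/-- The neurons `p` and `q` fire (i.e. `p(t) ∨ q(t) = true`) exactly at the times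
`t = l·2^{i-1} + 2n + m + i - 2` with `l ≥ 1`; equivalently, `¬p(t) ∧ ¬q(t)` is
`false` exactly at those times. -/
theorem stmt_7 (i n m : ℕ) (hi : 3 ≤ i) (hiodd : i % 2 = 1) (hn : 1 ≤ n) (hm : 1 ≤ m)
    (x : ℕ → Bool)
    (hx : ∀ t, x t = true ↔
      ∃ l, 1 ≤ l ∧ l % 2 = 1 ∧ l * 2 ^ (i - 1) + 2 * n ≤ t ∧
        t ≤ (l + 1) * 2 ^ (i - 1) + 2 * n - 1)
    (z1 z2 : ℕ → Bool)
    (hz1 : ∀ t, z1 (t + (m + i - 3)) = x t)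
    (hz2 : ∀ t, z2 (t + (m + i - 2)) = x t)
    (hz10 : ∀ t, t ≤ m + i - 3 → z1 t = false)
    (hz20 : ∀ t, t ≤ m + i - 2 → z2 t = false)
    (p q : ℕ → Bool) (hp0 : p 0 = false) (hq0 : q 0 = false)
    (hp : ∀ t, p (t + 1) = (z1 t && !(z2 t)))
    (hq : ∀ t, q (t + 1) = (!(z1 t) && z2 t)) :
    ∀ t, ((p t || q t) = true ↔ ∃ l, 1 ≤ l ∧ t = l * 2 ^ (i - 1) + 2 * n + m + i - 2) ∧
      ((!(p t) && !(q t)) = false ↔ ∃ l, 1 ≤ l ∧ t = l * 2 ^ (i - 1) + 2 * n + m + i - 2) :=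
  stmt_7_general i n m hi x hx z1 z2 hz1 hz2 hz10 hz20 p q hp0 hq0 hp hq
end

section
/- Fix an integer l ≥ 0. If t satisfies l·2^{i} + 2n + m + i + 1 ≤ t ≤ (l+1)·2^{i} + 2n + m + i - 1 and s(t) = z(t) = true, then s(t') = z(t') = true for every t' with t ≤ t' ≤ (l+1)·2^{i} + 2n + m + i - 1. -/
/-- If at some time `t` in the window `[l·2^i + 2n + m + i + 1, (l+1)·2^i + 2n + m + i - 1]`
both `s` and `z` are `true`, then they remain `true` until the end of the window. -/
theorem stmt_10 (i n m : ℕ) (hi : 1 ≤ i) (hn : 1 ≤ n) (hm : 1 ≤ m)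
    (p q s' s z : ℕ → Bool)
    (hpq : ∀ t, ((p t || q t) = true ↔ ∃ l, 1 ≤ l ∧ t = l * 2 ^ i + 2 * n + m + i - 1))
    (hs0 : s 0 = false) (hz0 : z 0 = false)
    (hs : ∀ t, s (t + 1) = ((s' t || z t) && !(p t) && !(q t)))
    (hz : ∀ t, z (t + 1) = ((s' t || s t) && !(p t) && !(q t))) :
    ∀ l t, l * 2 ^ i + 2 * n + m + i + 1 ≤ t → t ≤ (l + 1) * 2 ^ i + 2 * n + m + i - 1 →
      s t = true → z t = true →
      ∀ t', t ≤ t' → t' ≤ (l + 1) * 2 ^ i + 2 * n + m + i - 1 →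
        s t' = true ∧ z t' = true := by
  intro l t ht1 ht2 hst hzt t' htt' ht'le
  obtain ⟨k, rfl⟩ := Nat.exists_eq_add_of_le htt'
  induction k with
  | zero => exact ⟨hst, hzt⟩
  | succ k ih =>
    have h2 : 1 ≤ 2 ^ i := Nat.one_le_two_pow
    have ihk : s (t + k) = true ∧ z (t + k) = true := ih (by omega) (by omega)
    have hnp : (p (t + k) || q (t + k)) = false := by
      by_contra h
      have h' : (p (t + k) || q (t + k)) = true := by
        cases hh : (p (t + k) || q (t + k)) <;> simp_all
      obtain ⟨l', hl', heq⟩ := (hpq (t + k)).1 h'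
      rcases le_or_gt l' l with hc | hc
      · have := Nat.mul_le_mul_right (2 ^ i) hc
        omega
      · have : l + 1 ≤ l' := hc
        have := Nat.mul_le_mul_right (2 ^ i) this
        omega
    have hp : p (t + k) = false := by
      cases hh : p (t + k) <;> simp_all
    have hq : q (t + k) = false := by
      cases hh : q (t + k) <;> simp_all
    constructor
    · rw [show t + (k + 1) = (t + k) + 1 by ring, hs]
      simp [hp, hq, ihk.2]
    · rw [show t + (k + 1) = (t + k) + 1 by ring, hz]
      simp [hp, hq, ihk.1]
end

section
/- Suppose there is a neuron s ∈ V \ {I, O} such that f_O(σ) = σ(s) for every state σ : V → Bool. Then there exists a 1-vital set of G (i.e., a neuron v ∈ V \ {I, O} such that {v} has non-empty intersection with every degenerate circuit of G) if and only if G is non-trivial. -/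
/-- The trajectory of a neural circuit with update functions `f`, input neuron `I`, and
the set `S` of neurons silenced: at time `0` only `I` is stimulated (if not silenced),
and at time `t+1` a silenced neuron is non-stimulated while any other neuron `v`
evaluates its update function `f v` on the state at time `t`. -/
def silencedTraj {V : Type*} [DecidableEq V] (f : V → (V → Bool) → Bool) (I : V)
    (S : Finset V) : ℕ → V → Bool
  | 0 => fun v => decide (v = I ∧ v ∉ S)
  | t + 1 => fun v => if v ∈ S then false else f v (silencedTraj f I S t)

/-- The circuit with the neurons in `S` silenced is non-trivial: the output neuron `O`
is stimulated at some time `t > 0`. -/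
def SilencedNonTrivial {V : Type*} [DecidableEq V] (f : V → (V → Bool) → Bool)
    (I O : V) (S : Finset V) : Prop :=
  ∃ t, 0 < t ∧ silencedTraj f I S t O = true

/-- `N` is a degenerate circuit: it contains `I` and `O`, and the circuit obtained by
silencing all neurons outside `N` is non-trivial exactly when the full circuit is. -/
def IsDegenerate {V : Type*} [Fintype V] [DecidableEq V] (f : V → (V → Bool) → Bool)
    (I O : V) (N : Finset V) : Prop :=
  I ∈ N ∧ O ∈ N ∧
    (SilencedNonTrivial f I O (Finset.univ \ N) ↔ SilencedNonTrivial f I O ∅)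

lemma silenced_s_false {V : Type*} [DecidableEq V] (f : V → (V → Bool) → Bool)
    (I s : V) (S : Finset V) (hsI : s ≠ I) (hs : s ∈ S) :
    ∀ t, silencedTraj f I S t s = false := by
  intro t
  cases t with
  | zero => simp [silencedTraj]; intro h; exact absurd h hsI
  | succ n => simp [silencedTraj, hs]

lemma silenced_trivial {V : Type*} [DecidableEq V] (f : V → (V → Bool) → Bool)
    (I O s : V) (S : Finset V) (hsI : s ≠ I) (hs : s ∈ S)
    (hfO : ∀ σ : V → Bool, f O σ = σ s) :
    ¬ SilencedNonTrivial f I O S := by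
  rintro ⟨t, ht, hO⟩
  cases t with
  | zero => exact absurd ht (lt_irrefl 0)
  | succ n =>
    simp only [silencedTraj] at hO
    by_cases hOS : O ∈ S
    · simp [hOS] at hO
    · rw [if_neg hOS, hfO, silenced_s_false f I s S hsI hs] at hO
      exact absurd hO (by simp)

/-- If the output neuron's update function copies the state of some neuron `s ∉ {I, O}`,
then a 1-vital set exists — i.e. there is a neuron `v ∉ {I, O}` belonging to every
degenerate circuit — if and only if the circuit is non-trivial. -/
theorem stmt_18 {V : Type*} [Fintype V] [DecidableEq V]
    (f : V → (V → Bool) → Bool) (I O s : V) (hIO : I ≠ O)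
    (hsI : s ≠ I) (hsO : s ≠ O)
    (hfO : ∀ σ : V → Bool, f O σ = σ s) :
    (∃ v : V, v ≠ I ∧ v ≠ O ∧ ∀ N : Finset V, IsDegenerate f I O N → v ∈ N) ↔
      SilencedNonTrivial f I O ∅ := by
  constructor
  · rintro ⟨v, hvI, hvO, hv⟩
    by_contra hnt
    have hdeg : IsDegenerate f I O {I, O} := by
      refine ⟨by simp, by simp, ?_⟩
      constructor
      · intro h
        exact absurd h (silenced_trivial f I O s _ hsI (by simp [hsI, hsO]) hfO)
      · intro h; exact absurd h hnt
    have := hv _ hdeg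
    simp at this
    rcases this with h | h
    · exact hvI h
    · exact hvO h
  · intro hnt
    refine ⟨s, hsI, hsO, ?_⟩
    intro N hN
    by_contra hsN
    have hsil : s ∈ Finset.univ \ N := by simp [hsN]
    have := silenced_trivial f I O s _ hsI hsil hfO
    exact this (hN.2.2.mpr hnt)
end
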